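/- Let A be the simple (n+1)-dimensional n-ary Filippov algebra of type (D_{n+1}) over an algebraically closed field of characteristic zero, and let φ be a nonzero δ-derivation of A with δ ∉ {0, 1, -1, 1/n}. Then φ does not exist; i.e., every nonzero δ-derivation of A with δ ≠ 0,1 is either an antiderivation (δ = -1) or a (1/n)-derivation lying in the centroid (a scalar multiple of identity). -/

import Mathlib

/-!
Let `a` be the matrix of `φ` in the basis `b`. Applying `φ` to the defining brackets
`[b_j : j ≠ i] = b_i` and expanding by multilinearity gives `a_ii = δ ∑_{j ≠ i} a_jj` and, for
`t ≠ i`, `a_ti = ± δ a_it`, where the sign is that of the reordering turning `[…, b_i, …]` into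
`[b_j : j ≠ t]`. The reorderings for `(i, t)` and `(t, i)` are mutually inverse, so
`a_ti = δ² a_ti`, and off-diagonal entries vanish when `δ ≠ ±1`. The diagonal relations read
`(1 + δ) a_ii = δ tr a`, so `φ = c • id`, and then the derivation identity says `c = n δ c`.
-/

open Equiv Function Module

def succAboveSwap {n : ℕ} (i k : Fin (n + 1)) : Perm (Fin n) :=
  (finSuccAboveEquiv i).trans <|
    ((swap i k).subtypeEquiv fun x => by simp [swap_apply_eq_iff]).trans (finSuccAboveEquiv k).symm

theorem succAbove_succAboveSwap {n : ℕ} (i k : Fin (n + 1)) (j : Fin n) :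
    k.succAbove (succAboveSwap i k j) = swap i k (i.succAbove j) :=
  congrArg Subtype.val ((finSuccAboveEquiv k).apply_symm_apply _)

theorem succAboveSwap_symm {n : ℕ} (i k : Fin (n + 1)) :
    (succAboveSwap i k).symm = succAboveSwap k i := by
  ext j : 1
  rw [symm_apply_eq]
  apply Fin.succAbove_right_injective (p := k)
  rw [succAbove_succAboveSwap, succAbove_succAboveSwap, swap_comm, swap_apply_self]

theorem sign_succAboveSwap_mul_sign_succAboveSwap {n : ℕ} (i k : Fin (n + 1)) :
    Perm.sign (succAboveSwap i k) * Perm.sign (succAboveSwap k i) = 1 := by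
  rw [← succAboveSwap_symm, Perm.sign_symm, Int.units_mul_self]

section DeltaDerivation

variable {R A : Type*} [CommRing R] [AddCommGroup A] [Module R A] {n : ℕ}
  {b : Basis (Fin (n + 1)) R A} {br : AlternatingMap R A A (Fin n)}

namespace AlternatingMap

theorem map_basis_comp_swap_succAbove (hbr : ∀ i : Fin (n + 1), br (b ∘ i.succAbove) = b i)
    (i k : Fin (n + 1)) :
    br (b ∘ swap i k ∘ i.succAbove) = Perm.sign (succAboveSwap i k) • b k := by
  have : b ∘ swap i k ∘ i.succAbove = (b ∘ k.succAbove) ∘ succAboveSwap i k := by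
    funext j; simp [succAbove_succAboveSwap]
  rw [this, br.map_perm, hbr]

theorem map_update_basis_comp_succAbove (hbr : ∀ i : Fin (n + 1), br (b ∘ i.succAbove) = b i)
    (i : Fin (n + 1)) (m : Fin n) (k : Fin (n + 1)) :
    br (update (b ∘ i.succAbove) m (b k)) =
      if k = i.succAbove m then b i
      else if k = i then Perm.sign (succAboveSwap i (i.succAbove m)) • b (i.succAbove m)
      else 0 := by
  split_ifs with hkm hki
  · rw [hkm, ← comp_apply (f := b), update_eq_self, hbr]
  · have : update (b ∘ i.succAbove) m (b k) = b ∘ swap i (i.succAbove m) ∘ i.succAbove := by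
      funext l
      rcases eq_or_ne l m with rfl | hl
      · simp [hki]
      · simp [update_of_ne hl, swap_apply_of_ne_of_ne (Fin.succAbove_ne i l)
          (Fin.succAbove_right_injective.ne hl)]
    rw [this, map_basis_comp_swap_succAbove hbr]
  · obtain ⟨m', rfl⟩ := Fin.exists_succAbove_eq hki
    have hm' : m' ≠ m := fun h => hkm (h ▸ rfl)
    exact br.map_eq_zero_of_eq _ (by simp [update_of_ne hm']) hm'

end AlternatingMap

def IsDeltaDerivation (br : AlternatingMap R A A (Fin n)) (δ : R) (φ : A →ₗ[R] A) : Prop :=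
  ∀ x : Fin n → A, φ (br x) = δ • ∑ i, br (update x i (φ (x i)))

variable {δ : R} {φ : A →ₗ[R] A}

namespace IsDeltaDerivation

theorem apply_basis (hbr : ∀ i : Fin (n + 1), br (b ∘ i.succAbove) = b i)
    (hφ : IsDeltaDerivation br δ φ) (i : Fin (n + 1)) :
    φ (b i) = δ • ∑ m, (LinearMap.toMatrix b b φ (i.succAbove m) (i.succAbove m) • b i +
      (Perm.sign (succAboveSwap i (i.succAbove m)) * LinearMap.toMatrix b b φ i (i.succAbove m)) •
        b (i.succAbove m)) := by
  rw [← hbr i, hφ, hbr i]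
  congr 1
  refine Finset.sum_congr rfl fun m _ => ?_
  rw [comp_apply, ← b.sum_repr (φ (b _)), br.map_update_sum]
  simp_rw [br.map_update_smul, AlternatingMap.map_update_basis_comp_succAbove hbr]
  simp only [smul_ite, smul_zero, Finset.sum_ite, Finset.filter_eq', Finset.filter_ne',
    Finset.mem_univ, Finset.mem_erase, ↓reduceIte, ne_eq, Fin.ne_succAbove, not_false_eq_true,
    and_self, Finset.sum_singleton, Finset.sum_const_zero, add_zero, LinearMap.toMatrix_apply,
    mul_smul, add_right_inj]
  rw [Units.smul_def, ← Int.cast_smul_eq_zsmul R, smul_comm]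

theorem toMatrix_apply_self (hbr : ∀ i : Fin (n + 1), br (b ∘ i.succAbove) = b i)
    (hφ : IsDeltaDerivation br δ φ) (i : Fin (n + 1)) :
    LinearMap.toMatrix b b φ i i =
      δ * ∑ m, LinearMap.toMatrix b b φ (i.succAbove m) (i.succAbove m) := by
  rw [LinearMap.toMatrix_apply, hφ.apply_basis hbr i]
  simp [Finset.mul_sum]

theorem toMatrix_apply_of_ne (hbr : ∀ i : Fin (n + 1), br (b ∘ i.succAbove) = b i)
    (hφ : IsDeltaDerivation br δ φ) {i t : Fin (n + 1)} (hti : t ≠ i) :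
    LinearMap.toMatrix b b φ t i =
      δ * (Perm.sign (succAboveSwap i t) * LinearMap.toMatrix b b φ i t) := by
  obtain ⟨m, rfl⟩ := Fin.exists_succAbove_eq hti
  rw [LinearMap.toMatrix_apply, hφ.apply_basis hbr i]
  simp [Finsupp.single_apply, Fin.succAbove_ne]

theorem toMatrix_eq_zero_of_ne [IsDomain R] (hbr : ∀ i : Fin (n + 1), br (b ∘ i.succAbove) = b i)
    (hφ : IsDeltaDerivation br δ φ) (hδ₁ : δ ≠ 1) (hδ₂ : δ ≠ -1) {i t : Fin (n + 1)}
    (hti : t ≠ i) : LinearMap.toMatrix b b φ t i = 0 := by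
  have h := hφ.toMatrix_apply_of_ne hbr hti
  rw [hφ.toMatrix_apply_of_ne hbr hti.symm] at h
  have hsign : (Perm.sign (succAboveSwap i t) * Perm.sign (succAboveSwap t i) : R) = 1 := by
    rw [← Int.cast_mul, ← Units.val_mul, sign_succAboveSwap_mul_sign_succAboveSwap]; simp
  have h' : ((1 - δ) * (1 + δ)) * LinearMap.toMatrix b b φ t i = 0 := by
    linear_combination h + δ ^ 2 * LinearMap.toMatrix b b φ t i * hsign
  refine (mul_eq_zero.mp h').resolve_left (mul_ne_zero ?_ ?_)
  · exact sub_ne_zero.mpr hδ₁.symm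
  · exact fun h => hδ₂ (by linear_combination h)

theorem toMatrix_diag_eq [IsDomain R] (hbr : ∀ i : Fin (n + 1), br (b ∘ i.succAbove) = b i)
    (hφ : IsDeltaDerivation br δ φ) (hδ : δ ≠ -1) (i j : Fin (n + 1)) :
    LinearMap.toMatrix b b φ i i = LinearMap.toMatrix b b φ j j := by
  have htrace (k : Fin (n + 1)) :
      (1 + δ) * LinearMap.toMatrix b b φ k k = δ * (LinearMap.toMatrix b b φ).trace := by
    rw [Matrix.trace, Fin.sum_univ_succAbove _ k]
    simp only [Matrix.diag_apply]
    linear_combination hφ.toMatrix_apply_self hbr k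
  have hδ' : 1 + δ ≠ 0 := fun h => hδ (by linear_combination h)
  exact mul_left_cancel₀ hδ' ((htrace i).trans (htrace j).symm)

theorem exists_eq_smul_id [IsDomain R] (hbr : ∀ i : Fin (n + 1), br (b ∘ i.succAbove) = b i)
    (hφ : IsDeltaDerivation br δ φ) (hδ₁ : δ ≠ 1) (hδ₂ : δ ≠ -1) :
    ∃ c : R, φ = c • LinearMap.id := by
  refine ⟨LinearMap.toMatrix b b φ 0 0, (LinearMap.toMatrix b b).injective ?_⟩
  ext t i
  rw [map_smul, LinearMap.toMatrix_id, Matrix.smul_apply, Matrix.one_apply]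
  split_ifs with hti
  · rw [hti, hφ.toMatrix_diag_eq hbr hδ₂ i 0, smul_eq_mul, mul_one]
  · rw [hφ.toMatrix_eq_zero_of_ne hbr hδ₁ hδ₂ hti, smul_zero]

theorem smul_map_eq_of_smul_id {c : R} (hφ : IsDeltaDerivation br δ (c • LinearMap.id))
    (x : Fin n → A) :
    c • br x = (δ * n * c) • br x := by
  have h := hφ x
  simp only [LinearMap.smul_apply, LinearMap.id_apply, br.map_update_smul, update_eq_self,
    Finset.sum_const, Finset.card_univ, Fintype.card_fin] at h
  rw [h, ← Nat.cast_smul_eq_nsmul R, smul_smul, smul_smul]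

end IsDeltaDerivation

end DeltaDerivation

theorem simple_Filippov_delta_derivations_general
    {F A : Type*} [Field F]
    [AddCommGroup A] [Module F A]
    {n : ℕ}
    (b : Module.Basis (Fin (n + 1)) F A)
    (br : AlternatingMap F A A (Fin n))
    (hbr : ∀ i : Fin (n + 1), br (b ∘ i.succAbove) = b i)
    (δ : F) (hδ1 : δ ≠ 1)
    (φ : A →ₗ[F] A) (hφ0 : φ ≠ 0)
    (hφ : ∀ x : Fin n → A,
      φ (br x) = δ • ∑ i, br (Function.update x i (φ (x i)))) :
    δ = -1 ∨ (δ = (n : F)⁻¹ ∧ ∃ c : F, ∀ x : A, φ x = c • x) := by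
  by_cases hδ : δ = -1
  · exact Or.inl hδ
  have hφ' : IsDeltaDerivation br δ φ := hφ
  obtain ⟨c, rfl⟩ := hφ'.exists_eq_smul_id hbr hδ1 hδ
  have hc : c ≠ 0 := by
    rintro rfl
    exact hφ0 (zero_smul F _)
  have hcn : c = δ * n * c := by
    refine smul_left_injective F (b.ne_zero 0) ?_
    simpa only [hbr] using hφ'.smul_map_eq_of_smul_id (b ∘ Fin.succAbove 0)
  refine Or.inr ⟨eq_inv_of_mul_eq_one_left ?_, c, fun x => rfl⟩
  exact mul_right_cancel₀ hc (by linear_combination hcn.symm)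

/-- The simple `(n+1)`-dimensional `n`-ary Filippov algebra (type `(D_{n+1})`)
over an algebraically closed field of characteristic zero: every nonzero
`δ`-derivation with `δ ≠ 0, 1` is either an antiderivation (`δ = -1`) or a
`(1/n)`-derivation lying in the centroid (a scalar multiple of the identity). -/
theorem simple_Filippov_delta_derivations
    {F A : Type*} [Field F] [IsAlgClosed F] [CharZero F]
    [AddCommGroup A] [Module F A]
    {n : ℕ} (hn : 2 ≤ n)
    (b : Module.Basis (Fin (n + 1)) F A)
    (br : AlternatingMap F A A (Fin n))
    (hbr : ∀ i : Fin (n + 1), br (b ∘ i.succAbove) = b i)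
    (δ : F) (hδ0 : δ ≠ 0) (hδ1 : δ ≠ 1)
    (φ : A →ₗ[F] A) (hφ0 : φ ≠ 0)
    (hφ : ∀ x : Fin n → A,
      φ (br x) = δ • ∑ i, br (Function.update x i (φ (x i)))) :
    δ = -1 ∨ (δ = (n : F)⁻¹ ∧ ∃ c : F, ∀ x : A, φ x = c • x) :=
  simple_Filippov_delta_derivations_general b br hbr δ hδ1 φ hφ0 hφ
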